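/- Let K be a field and A = K[s,t,x,y]/(sx^2+txy+sy^2). Then for every integer n ≥ 2, the ideal (x^n, y^n, sxy^{n−1})A of A equals the intersection (x,y)^n·A ∩ (x^n, y^n, sxy^{n−1}, s^n, t^n)A, and both ideals (x,y)^n·A and (x^n, y^n, sxy^{n−1}, s^n, t^n)A are primary ideals of A; in particular this intersection is a primary decomposition of (x^n, y^n, sxy^{n−1})A. -/

import Mathlib

set_option synthInstance.maxHeartbeats 1000000
set_option maxHeartbeats 1000000

open MvPolynomial

/-- The polynomial `sx² + txy + sy²` in `K[s,t,x,y]`, with `s = X 0`, `t = X 1`, `x = X 2`,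
`y = X 3`. -/
noncomputable def sQuad (K : Type) [Field K] : MvPolynomial (Fin 4) K :=
  X 0 * X 2 ^ 2 + X 1 * X 2 * X 3 + X 0 * X 3 ^ 2

/-- The hypersurface `A = K[s,t,x,y]/(sx² + txy + sy²)`. -/
abbrev Aring (K : Type) [Field K] : Type :=
  MvPolynomial (Fin 4) K ⧸ Ideal.span {sQuad K}

/-- The quotient map `K[s,t,x,y] → A`. -/
noncomputable def π (K : Type) [Field K] : MvPolynomial (Fin 4) K →+* Aring K :=
  Ideal.Quotient.mk _

/-!
Grade `K[s,t,x,y]` by the degree in `x, y`. Then `f = sx² + txy + sy²` is homogeneous of degree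
2 and prime, and `(x,y)ⁿ` consists of the polynomials without components of degree `< n`.

* `(x,y)ⁿA` is primary: if `ab ∈ (x,y)ⁿA` and `b ∉ (x,y)A`, then `b` has a degree-0 component
  `b₀ ∉ (f)`, and comparing the degree-`k` components shows, one degree at a time, that the
  lowest component of `a` is divisible by `f`.
* For the intersection it suffices that `αsⁿ + βtⁿ ∈ (x,y)ⁿA` implies
  `αsⁿ + βtⁿ ∈ J = (xⁿ, yⁿ, sxyⁿ⁻¹)`. The components of `α, β` of degree `< n` contribute an
  element of `(f)`, i.e. `0` in `A`, while `sⁿ(x,y)ⁿ ⊆ J` and `tⁿ(x,y)ⁿ ⊆ J`: the relation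
  `sx² = -txy - sy²` lowers the power of `x` at the cost of a factor `t` or `s`, and
  `txy = -s(x² + y²)` trades a factor `t` for a factor `s`.
* `(xⁿ, yⁿ, sxyⁿ⁻¹, sⁿ, tⁿ)A` has the maximal ideal `(s,t,x,y)A` as its radical.
-/

namespace SQuad

section Relation

variable {R : Type*} [CommRing R]

theorem span_pair_pow (x y : R) (n : ℕ) :
    Ideal.span {x, y} ^ n = Ideal.span {z | ∃ i j, i + j = n ∧ x ^ i * y ^ j = z} := by
  induction n with
  | zero =>
    rw [pow_zero, Ideal.one_eq_top, eq_comm, Ideal.eq_top_iff_one]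
    exact Ideal.subset_span ⟨0, 0, rfl, by simp⟩
  | succ n ih =>
    rw [pow_succ, ih, Ideal.span_mul_span']
    congr 1
    ext z
    simp only [Set.mem_mul, Set.mem_ofPred_eq, Set.mem_insert_iff, Set.mem_singleton_iff]
    constructor
    · rintro ⟨_, ⟨i, j, rfl, rfl⟩, _, rfl | rfl, rfl⟩
      exacts [⟨i + 1, j, by ring, by ring⟩, ⟨i, j + 1, by ring, by ring⟩]
    · rintro ⟨_ | i, j, hij, rfl⟩
      · obtain ⟨j, rfl⟩ : ∃ j', j = j' + 1 := ⟨j - 1, by omega⟩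
        exact ⟨_, ⟨0, j, by omega, rfl⟩, y, Or.inr rfl, by ring⟩
      · exact ⟨_, ⟨i, j, by omega, rfl⟩, x, Or.inl rfl, by ring⟩

theorem span_le_span_pair_pow (s x y : R) (n : ℕ) :
    Ideal.span {x ^ n, y ^ n, s * x * y ^ (n - 1)} ≤ Ideal.span {x, y} ^ n := by
  have hx : x ∈ Ideal.span {x, y} := Ideal.subset_span (by simp)
  have hy : y ∈ Ideal.span {x, y} := Ideal.subset_span (by simp)
  rw [Ideal.span_le]
  rintro _ (rfl | rfl | rfl)
  · exact Ideal.pow_mem_pow hx n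
  · exact Ideal.pow_mem_pow hy n
  · cases n with
    | zero => simp
    | succ n =>
      rw [mul_assoc, Nat.add_sub_cancel, pow_succ']
      exact Ideal.mul_mem_left _ _ (Ideal.mul_mem_mul hx (Ideal.pow_mem_pow hy n))

theorem span_eq_inf_of_forall_mem {s t x y : R} {n : ℕ}
    (hkey : ∀ α β : R, α * s ^ n + β * t ^ n ∈ Ideal.span {x, y} ^ n →
      α * s ^ n + β * t ^ n ∈ Ideal.span {x ^ n, y ^ n, s * x * y ^ (n - 1)}) :
    Ideal.span {x ^ n, y ^ n, s * x * y ^ (n - 1)} =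
      Ideal.span {x, y} ^ n ⊓ Ideal.span {x ^ n, y ^ n, s * x * y ^ (n - 1), s ^ n, t ^ n} := by
  have hsplit : Ideal.span {x ^ n, y ^ n, s * x * y ^ (n - 1), s ^ n, t ^ n} =
      Ideal.span {x ^ n, y ^ n, s * x * y ^ (n - 1)} ⊔ Ideal.span {s ^ n, t ^ n} := by
    rw [← Ideal.span_union, Set.insert_union, Set.insert_union, Set.singleton_union]
  rw [hsplit]
  refine le_antisymm (le_inf (span_le_span_pair_pow s x y n) le_sup_left) ?_
  rintro g ⟨hgP, hgJ⟩
  obtain ⟨j, hj, u, hu, rfl⟩ := Submodule.mem_sup.mp hgJ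
  obtain ⟨α, β, rfl⟩ := Ideal.mem_span_pair.mp hu
  refine add_mem hj (hkey α β ?_)
  simpa using sub_mem hgP (span_le_span_pair_pow s x y n hj)

theorem isPrimary_span_of_isMaximal {s t x y : R} {n : ℕ}
    (hm : (Ideal.span {s, t, x, y}).IsMaximal) (hn : n ≠ 0) :
    (Ideal.span {x ^ n, y ^ n, s * x * y ^ (n - 1), s ^ n, t ^ n}).IsPrimary := by
  have hrad : (Ideal.span {x ^ n, y ^ n, s * x * y ^ (n - 1), s ^ n, t ^ n}).radical =
      Ideal.span {s, t, x, y} := by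
    have hmem : ∀ z ∈ ({s, t, x, y} : Set R), z ^ n ∈ Ideal.span {s, t, x, y} :=
      fun z hz => Ideal.pow_mem_of_mem _ (Ideal.subset_span hz) n (Nat.pos_of_ne_zero hn)
    refine le_antisymm ((hm.isPrime.radical_le_iff).mpr (Ideal.span_le.mpr ?_))
      (Ideal.span_le.mpr ?_)
    · rintro _ (rfl | rfl | rfl | rfl | rfl)
      · exact hmem x (by simp)
      · exact hmem y (by simp)
      · exact Ideal.mul_mem_right _ _ (Ideal.mul_mem_right _ _ (Ideal.subset_span (by simp)))
      · exact hmem s (by simp)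
      · exact hmem t (by simp)
    · rintro _ (rfl | rfl | rfl | rfl) <;> exact ⟨n, Ideal.subset_span (by simp)⟩
  exact Ideal.isPrimary_of_isMaximal_radical (hrad ▸ hm)

variable {s t x y : R} (hf : s * x ^ 2 + t * x * y + s * y ^ 2 = 0)
include hf

theorem s_pow_mul_mem_span {n : ℕ} (i j : ℕ) (hij : i + j = n) :
    s ^ i * (x ^ i * y ^ j) ∈ Ideal.span {x ^ n, y ^ n, s * x * y ^ (n - 1)} := by
  induction i using Nat.strong_induction_on generalizing j with
  | _ i ih =>
    rcases i with _ | _ | i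
    · exact Ideal.subset_span (by simp [← hij])
    · exact Ideal.subset_span (by simp [← hij, mul_assoc])
    · have key : s ^ (i + 2) * (x ^ (i + 2) * y ^ j) =
          -(t * (s ^ (i + 1) * (x ^ (i + 1) * y ^ (j + 1))))
            - s ^ 2 * (s ^ i * (x ^ i * y ^ (j + 2))) := by
        linear_combination (s ^ (i + 1) * x ^ i * y ^ j) * hf
      rw [key]
      exact sub_mem (neg_mem (Ideal.mul_mem_left _ _ (ih (i + 1) (by omega) _ (by omega))))
        (Ideal.mul_mem_left _ _ (ih i (by omega) _ (by omega)))

theorem span_s_pow_mul_span_pair_pow_le (n : ℕ) :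
    Ideal.span {s} ^ n * Ideal.span {x, y} ^ n ≤
      Ideal.span {x ^ n, y ^ n, s * x * y ^ (n - 1)} := by
  rw [span_pair_pow, Ideal.span_singleton_pow, Ideal.span_mul_span', Ideal.span_le]
  rintro _ ⟨_, rfl, _, ⟨i, j, hij, rfl⟩, rfl⟩
  have : s ^ n * (x ^ i * y ^ j) = s ^ (n - i) * (s ^ i * (x ^ i * y ^ j)) := by
    rw [← mul_assoc (s ^ (n - i)), ← pow_add, Nat.sub_add_cancel (by omega : i ≤ n)]
  dsimp only
  rw [this]
  exact Ideal.mul_mem_left _ _ (s_pow_mul_mem_span hf i j hij)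

theorem span_t_mul_span_pair_pow_le (n : ℕ) :
    Ideal.span {t} * Ideal.span {x, y} ^ n ≤
      Ideal.span {x ^ n, y ^ n, s * x * y ^ (n - 1)} ⊔ Ideal.span {s} * Ideal.span {x, y} ^ n := by
  have hmon : ∀ i j, i + j = n → x ^ i * y ^ j ∈ Ideal.span {x, y} ^ n := by
    rw [span_pair_pow]
    exact fun i j hij => Ideal.subset_span ⟨i, j, hij, rfl⟩
  conv_lhs => rw [span_pair_pow, Ideal.span_mul_span']
  rw [Ideal.span_le]
  rintro _ ⟨a, ha, _, ⟨i, j, hij, rfl⟩, rfl⟩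
  rw [Set.mem_singleton_iff] at ha
  dsimp only
  rw [ha]
  rcases i with _ | i
  · refine Ideal.mem_sup_left (Ideal.mul_mem_left _ _ (Ideal.subset_span ?_))
    simp [← hij]
  rcases j with _ | j
  · refine Ideal.mem_sup_left (Ideal.mul_mem_left _ _ (Ideal.subset_span ?_))
    simp [← hij]
  have key : t * (x ^ (i + 1) * y ^ (j + 1)) =
      -(s * (x ^ (i + 2) * y ^ j)) - s * (x ^ i * y ^ (j + 2)) := by
    linear_combination (x ^ i * y ^ j) * hf
  rw [key]
  exact Ideal.mem_sup_right (sub_mem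
    (neg_mem (Ideal.mul_mem_mul (Ideal.mem_span_singleton_self s) (hmon _ _ (by omega))))
    (Ideal.mul_mem_mul (Ideal.mem_span_singleton_self s) (hmon _ _ (by omega))))

theorem span_t_pow_mul_span_pair_pow_le (n : ℕ) :
    Ideal.span {t} ^ n * Ideal.span {x, y} ^ n ≤
      Ideal.span {x ^ n, y ^ n, s * x * y ^ (n - 1)} := by
  set J := Ideal.span {x ^ n, y ^ n, s * x * y ^ (n - 1)}
  set P := Ideal.span {x, y} ^ n
  have h : ∀ k, Ideal.span {t} ^ k * P ≤ J ⊔ Ideal.span {s} ^ k * P := by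
    intro k
    induction k with
    | zero => simp
    | succ k ih =>
      calc Ideal.span {t} ^ (k + 1) * P = Ideal.span {t} * (Ideal.span {t} ^ k * P) := by
            rw [pow_succ', mul_assoc]
        _ ≤ Ideal.span {t} * (J ⊔ Ideal.span {s} ^ k * P) := Ideal.mul_mono_right ih
        _ = Ideal.span {t} * J ⊔ Ideal.span {s} ^ k * (Ideal.span {t} * P) := by
            rw [Ideal.mul_sup, mul_left_comm]
        _ ≤ J ⊔ Ideal.span {s} ^ k * (J ⊔ Ideal.span {s} * P) :=
            sup_le_sup Ideal.mul_le_right (Ideal.mul_mono_right (span_t_mul_span_pair_pow_le hf n))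
        _ ≤ J ⊔ Ideal.span {s} ^ (k + 1) * P := by
            rw [Ideal.mul_sup, ← mul_assoc, ← pow_succ]
            exact sup_le le_sup_left (sup_le (Ideal.mul_le_right.trans le_sup_left) le_sup_right)
  exact (h n).trans (sup_le le_rfl (span_s_pow_mul_span_pair_pow_le hf n))

end Relation

section MvPolynomial

variable {σ R M : Type*} [CommSemiring R] [AddCommMonoid M] [DecidableEq M]

attribute [local instance] weightedGradedAlgebra

theorem weightedHomogeneousComponent_mul_of_isWeightedHomogeneous_zero {w : σ → M}
    {p q : MvPolynomial σ R} (hq : IsWeightedHomogeneous w q 0) (m : M) :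
    weightedHomogeneousComponent w m (p * q) = weightedHomogeneousComponent w m p * q := by
  simp only [← weightedDecomposition.decompose'_apply]
  exact DirectSum.coe_decompose_mul_of_right_mem_zero _ hq

theorem weightedHomogeneousComponent_mem_span_singleton {w : σ → M} {f : MvPolynomial σ R}
    {m : M} (hf : IsWeightedHomogeneous w f m) {p : MvPolynomial σ R} (hp : p ∈ Ideal.span {f})
    (k : M) :
    weightedHomogeneousComponent w k p ∈ Ideal.span {f} :=
  weightedHomogeneousComponent_mem_of_mem R w
    (Ideal.homogeneous_span _ _ (by rintro _ rfl; exact ⟨m, hf⟩)) hp k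

theorem isMaximal_idealOfVars {σ F : Type*} [Field F] : (idealOfVars σ F).IsMaximal := by
  have : idealOfVars σ F = RingHom.ker (constantCoeff : MvPolynomial σ F →+* F) := by
    ext p
    rw [← pow_one (idealOfVars σ F), mem_pow_idealOfVars_iff', RingHom.mem_ker, constantCoeff_eq]
    refine ⟨fun h => h 0 (by simp), fun h d hd => ?_⟩
    rwa [(Finsupp.degree_eq_zero_iff d).mp (by omega)]
  rw [this]
  exact RingHom.ker_isMaximal_of_surjective _ fun c => ⟨C c, constantCoeff_C _ c⟩

theorem X_not_dvd_of_eval_ne_zero {σ R : Type*} [CommSemiring R] {i : σ} (v : σ → R)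
    (hvi : v i = 0) {q : MvPolynomial σ R} (hq : eval v q ≠ 0) : ¬ X i ∣ q := fun h =>
  hq (by simpa [hvi] using map_dvd (aeval v) h)

end MvPolynomial

variable {K : Type} [Field K]

theorem isRelPrime_X_sq_add_X_sq :
    IsRelPrime (X 1 ^ 2 + X 2 ^ 2 : MvPolynomial (Fin 3) K) (X 0 * X 1 * X 2) := by
  have h : ∀ i : Fin 3, IsRelPrime (X 1 ^ 2 + X 2 ^ 2 : MvPolynomial (Fin 3) K) (X i) := by
    intro i
    refine (X_prime.irreducible.isRelPrime_iff_not_dvd.mpr ?_).symm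
    fin_cases i
    · exact X_not_dvd_of_eval_ne_zero ![0, 1, 0] rfl (by simp)
    · exact X_not_dvd_of_eval_ne_zero ![0, 0, 1] rfl (by simp)
    · exact X_not_dvd_of_eval_ne_zero ![0, 1, 0] rfl (by simp)
  exact ((h 0).mul_right (h 1)).mul_right (h 2)

theorem finSuccEquiv_sQuad : finSuccEquiv K 3 (sQuad K) =
    .C (X 1 ^ 2 + X 2 ^ 2) * .X + .C (X 0 * X 1 * X 2) := by
  have e1 : (1 : Fin 4) = Fin.succ 0 := rfl
  have e2 : (2 : Fin 4) = Fin.succ 1 := rfl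
  have e3 : (3 : Fin 4) = Fin.succ 2 := rfl
  simp only [sQuad, e1, e2, e3, map_add, map_mul, map_pow, finSuccEquiv_X_zero,
    finSuccEquiv_X_succ]
  ring

theorem prime_sQuad : Prime (sQuad K) := by
  rw [← irreducible_iff_prime, ← MulEquiv.irreducible_iff (finSuccEquiv K 3), finSuccEquiv_sQuad]
  refine Polynomial.irreducible_C_mul_X_add_C (fun h => ?_) isRelPrime_X_sq_add_X_sq
  simpa using congrArg (eval ![(0 : K), 1, 0]) h

def xyWeight : Fin 4 → ℕ := ![0, 0, 1, 1]

theorem weight_xyWeight (d : Fin 4 →₀ ℕ) : Finsupp.weight xyWeight d = d 2 + d 3 := by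
  simp [Finsupp.weight_apply, Finsupp.sum_fintype, Fin.sum_univ_four, xyWeight]

theorem isWeightedHomogeneous_sQuad : IsWeightedHomogeneous xyWeight (sQuad K) 2 := by
  have hX : ∀ i, IsWeightedHomogeneous xyWeight (X i : MvPolynomial (Fin 4) K) (xyWeight i) :=
    isWeightedHomogeneous_X K xyWeight
  exact (((hX 0).mul ((hX 2).pow 2)).add (((hX 1).mul (hX 2)).mul (hX 3))).add
    ((hX 0).mul ((hX 3).pow 2))

variable (K) in
noncomputable def xyIdeal : Ideal (MvPolynomial (Fin 4) K) := Ideal.span {X 2, X 3}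

theorem mem_xyIdeal_pow_iff {n : ℕ} {p : MvPolynomial (Fin 4) K} :
    p ∈ xyIdeal K ^ n ↔ ∀ d ∈ p.support, n ≤ d 2 + d 3 := by
  have hmon : {z | ∃ i j, i + j = n ∧ (X 2 : MvPolynomial (Fin 4) K) ^ i * X 3 ^ j = z} =
      (monomial · 1) '' {d | ∃ i j, i + j = n ∧ Finsupp.single 2 i + Finsupp.single 3 j = d} := by
    ext z
    simp only [Set.mem_ofPred_eq, Set.mem_image]
    constructor
    · rintro ⟨i, j, hij, rfl⟩
      exact ⟨_, ⟨i, j, hij, rfl⟩, by simp [X_pow_eq_monomial, monomial_mul]⟩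
    · rintro ⟨_, ⟨i, j, hij, rfl⟩, rfl⟩
      exact ⟨i, j, hij, by simp [X_pow_eq_monomial, monomial_mul]⟩
  rw [xyIdeal, span_pair_pow, hmon, mem_ideal_span_monomial_image]
  refine forall₂_congr fun d _ => ⟨?_, fun h => ?_⟩
  · rintro ⟨_, ⟨i, j, rfl, rfl⟩, hle⟩
    have h2 := hle 2
    have h3 := hle 3
    simp at h2 h3
    omega
  · refine ⟨_, ⟨min (d 2) n, n - min (d 2) n, by omega, rfl⟩, fun i => ?_⟩
    fin_cases i <;> simp
    omega

theorem weightedHomogeneousComponent_eq_zero_of_mem_xyIdeal_pow {n k : ℕ}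
    {p : MvPolynomial (Fin 4) K} (hp : p ∈ xyIdeal K ^ n) (hk : k < n) :
    weightedHomogeneousComponent xyWeight k p = 0 := by
  ext d
  rw [coeff_weightedHomogeneousComponent, weight_xyWeight, coeff_zero]
  split_ifs with h
  · by_contra hd
    have := mem_xyIdeal_pow_iff.mp hp d (mem_support_iff.mpr hd)
    omega
  · rfl

theorem mem_xyIdeal_pow_of_isWeightedHomogeneous {k : ℕ} {p : MvPolynomial (Fin 4) K}
    (hp : IsWeightedHomogeneous xyWeight p k) : p ∈ xyIdeal K ^ k :=
  mem_xyIdeal_pow_iff.mpr fun d hd => by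
    rw [← weight_xyWeight, hp (mem_support_iff.mp hd)]

theorem sub_weightedHomogeneousComponent_mem_xyIdeal_pow_succ {k : ℕ}
    {p : MvPolynomial (Fin 4) K} (hp : p ∈ xyIdeal K ^ k) :
    p - weightedHomogeneousComponent xyWeight k p ∈ xyIdeal K ^ (k + 1) := by
  rw [mem_xyIdeal_pow_iff] at hp ⊢
  intro d hd
  rw [mem_support_iff, coeff_sub, coeff_weightedHomogeneousComponent, weight_xyWeight] at hd
  split_ifs at hd with h
  · simp at hd
  · have := hp d (mem_support_iff.mpr (by simpa using hd))
    omega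

noncomputable def xyTrunc (n : ℕ) : MvPolynomial (Fin 4) K →ₗ[K] MvPolynomial (Fin 4) K :=
  ∑ k ∈ Finset.range n, weightedHomogeneousComponent xyWeight k

theorem xyTrunc_apply (n : ℕ) (p : MvPolynomial (Fin 4) K) :
    xyTrunc n p = ∑ k ∈ Finset.range n, weightedHomogeneousComponent xyWeight k p :=
  LinearMap.sum_apply _ _ _

theorem sub_xyTrunc_mem_xyIdeal_pow (n : ℕ) (p : MvPolynomial (Fin 4) K) :
    p - xyTrunc n p ∈ xyIdeal K ^ n := by
  refine mem_xyIdeal_pow_iff.mpr fun d hd => ?_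
  rw [mem_support_iff, coeff_sub, xyTrunc_apply, coeff_sum] at hd
  simp_rw [coeff_weightedHomogeneousComponent, weight_xyWeight] at hd
  rw [Finset.sum_ite_eq] at hd
  by_contra h
  simp [show d 2 + d 3 < n by omega] at hd

theorem xyTrunc_mul_of_isWeightedHomogeneous_zero {n : ℕ} {p q : MvPolynomial (Fin 4) K}
    (hq : IsWeightedHomogeneous xyWeight q 0) : xyTrunc n (p * q) = xyTrunc n p * q := by
  simp only [xyTrunc_apply, Finset.sum_mul,
    weightedHomogeneousComponent_mul_of_isWeightedHomogeneous_zero hq]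

theorem weightedHomogeneousComponent_mem_span_sQuad {n k : ℕ} {p : MvPolynomial (Fin 4) K}
    (hp : p ∈ xyIdeal K ^ n ⊔ Ideal.span {sQuad K}) (hk : k < n) :
    weightedHomogeneousComponent xyWeight k p ∈ Ideal.span {sQuad K} := by
  obtain ⟨a, ha, b, hb, rfl⟩ := Submodule.mem_sup.mp hp
  rw [map_add, weightedHomogeneousComponent_eq_zero_of_mem_xyIdeal_pow ha hk, zero_add]
  exact weightedHomogeneousComponent_mem_span_singleton isWeightedHomogeneous_sQuad hb k

theorem xyTrunc_mem_span_sQuad {n : ℕ} {p : MvPolynomial (Fin 4) K}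
    (hp : p ∈ xyIdeal K ^ n ⊔ Ideal.span {sQuad K}) : xyTrunc n p ∈ Ideal.span {sQuad K} :=
  (xyTrunc_apply n p).symm ▸ Ideal.sum_mem _ fun _ hk =>
    weightedHomogeneousComponent_mem_span_sQuad hp (Finset.mem_range.mp hk)

theorem span_sQuad_le_xyIdeal : Ideal.span {sQuad K} ≤ xyIdeal K := by
  have hx : (X 2 : MvPolynomial (Fin 4) K) ∈ xyIdeal K := Ideal.subset_span (by simp)
  have hy : (X 3 : MvPolynomial (Fin 4) K) ∈ xyIdeal K := Ideal.subset_span (by simp)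
  rw [Ideal.span_singleton_le_iff_mem, sQuad]
  exact add_mem (add_mem (Ideal.mul_mem_left _ _ (Ideal.pow_mem_of_mem _ hx 2 two_pos))
    (Ideal.mul_mem_left _ _ hy)) (Ideal.mul_mem_left _ _ (Ideal.pow_mem_of_mem _ hy 2 two_pos))

theorem one_notMem_xyIdeal : (1 : MvPolynomial (Fin 4) K) ∉ xyIdeal K := fun h =>
  absurd (mem_xyIdeal_pow_iff.mp (pow_one (xyIdeal K) ▸ h) 0 (by simp)) (by simp)

theorem mem_xyIdeal_pow_succ_sup_of_mul_mem {k : ℕ} {a b : MvPolynomial (Fin 4) K}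
    (ha : a ∈ xyIdeal K ^ k ⊔ Ideal.span {sQuad K})
    (hab : a * b ∈ xyIdeal K ^ (k + 1) ⊔ Ideal.span {sQuad K}) (hb : b ∉ xyIdeal K) :
    a ∈ xyIdeal K ^ (k + 1) ⊔ Ideal.span {sQuad K} := by
  obtain ⟨p, hp, c, hc, rfl⟩ := Submodule.mem_sup.mp ha
  set q := weightedHomogeneousComponent xyWeight k p
  set b₀ := weightedHomogeneousComponent xyWeight 0 b
  have hq : IsWeightedHomogeneous xyWeight q k :=
    weightedHomogeneousComponent_isWeightedHomogeneous k p
  have hb₀ : IsWeightedHomogeneous xyWeight b₀ 0 :=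
    weightedHomogeneousComponent_isWeightedHomogeneous 0 b
  have hpq : p - q ∈ xyIdeal K ^ (k + 1) :=
    sub_weightedHomogeneousComponent_mem_xyIdeal_pow_succ hp
  have hbb₀ : b - b₀ ∈ xyIdeal K := by
    simpa using sub_weightedHomogeneousComponent_mem_xyIdeal_pow_succ (p := b) (k := 0) (by simp)
  have hqb₀ : q * b₀ ∈ xyIdeal K ^ (k + 1) ⊔ Ideal.span {sQuad K} := by
    rw [show q * b₀ = (p + c) * b - (p - q) * b - c * b - q * (b - b₀) by ring]
    refine sub_mem (sub_mem (sub_mem hab ?_) ?_) (Ideal.mem_sup_left ?_)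
    · exact Ideal.mem_sup_left (Ideal.mul_mem_right _ _ hpq)
    · exact Ideal.mem_sup_right (Ideal.mul_mem_right _ _ hc)
    · rw [pow_succ]
      exact Ideal.mul_mem_mul (mem_xyIdeal_pow_of_isWeightedHomogeneous hq) hbb₀
  have hqb₀F : q * b₀ ∈ Ideal.span {sQuad K} := by
    have hhom : IsWeightedHomogeneous xyWeight (q * b₀) k := by simpa using hq.mul hb₀
    rw [← weightedHomogeneousComponent_eq_self hhom]
    exact weightedHomogeneousComponent_mem_span_sQuad hqb₀ (Nat.lt_succ_self k)
  have hprime := (Ideal.span_singleton_prime prime_sQuad.ne_zero).mpr (prime_sQuad (K := K))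
  rcases hprime.mem_or_mem hqb₀F with hqF | hb₀F
  · rw [show p + c = (p - q) + (q + c) by ring]
    exact Submodule.add_mem_sup hpq (add_mem hqF hc)
  · exact absurd (by simpa using add_mem hbb₀ (span_sQuad_le_xyIdeal hb₀F)) hb

theorem mem_xyIdeal_pow_sup_of_mul_mem {n : ℕ} {a b : MvPolynomial (Fin 4) K}
    (hab : a * b ∈ xyIdeal K ^ n ⊔ Ideal.span {sQuad K}) (hb : b ∉ xyIdeal K) :
    a ∈ xyIdeal K ^ n ⊔ Ideal.span {sQuad K} := by
  suffices ∀ k ≤ n, a ∈ xyIdeal K ^ k ⊔ Ideal.span {sQuad K} from this n le_rfl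
  intro k hk
  induction k with
  | zero => simp
  | succ k ih =>
    exact mem_xyIdeal_pow_succ_sup_of_mul_mem (ih (by omega))
      (sup_le_sup_right (Ideal.pow_le_pow_right (I := xyIdeal K) hk) _ hab) hb

theorem π_surjective : Function.Surjective (π K) := Ideal.Quotient.mk_surjective

theorem ker_π : RingHom.ker (π K) = Ideal.span {sQuad K} := Ideal.mk_ker

theorem mem_map_π_iff {I : Ideal (MvPolynomial (Fin 4) K)} {p : MvPolynomial (Fin 4) K} :
    π K p ∈ I.map (π K) ↔ p ∈ I ⊔ Ideal.span {sQuad K} := by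
  rw [← Ideal.mem_comap, Ideal.comap_map_of_surjective _ π_surjective, ← RingHom.ker_eq_comap_bot,
    ker_π]

theorem map_xyIdeal : (xyIdeal K).map (π K) = Ideal.span {π K (X 2), π K (X 3)} := by
  rw [xyIdeal, Ideal.map_span, Set.image_pair]

theorem π_sQuad_eq_zero : π K (X 0) * π K (X 2) ^ 2 + π K (X 1) * π K (X 2) * π K (X 3) +
    π K (X 0) * π K (X 3) ^ 2 = 0 := by
  have : π K (sQuad K) = 0 := by
    rw [← RingHom.mem_ker, ker_π]
    exact Ideal.mem_span_singleton_self _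
  simpa [sQuad] using this

theorem isPrimary_span_π_X_pow {n : ℕ} (hn : n ≠ 0) :
    (Ideal.span {π K (X 2), π K (X 3)} ^ n).IsPrimary := by
  rw [← map_xyIdeal, ← Ideal.map_pow, Ideal.isPrimary_iff]
  refine ⟨fun htop => one_notMem_xyIdeal (K := K) ?_, fun {α β} hαβ => ?_⟩
  · have h1 : π K 1 ∈ ((xyIdeal K) ^ n).map (π K) := by rw [htop]; trivial
    exact sup_le (Ideal.pow_le_self hn) span_sQuad_le_xyIdeal (mem_map_π_iff.mp h1)
  obtain ⟨a, rfl⟩ := π_surjective α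
  obtain ⟨b, rfl⟩ := π_surjective β
  by_cases hb : b ∈ xyIdeal K
  · exact Or.inr ⟨n, by rw [← map_pow]; exact Ideal.mem_map_of_mem _ (Ideal.pow_mem_pow hb n)⟩
  · rw [← map_mul, mem_map_π_iff] at hαβ
    exact Or.inl (mem_map_π_iff.mpr (mem_xyIdeal_pow_sup_of_mul_mem hαβ hb))

theorem mul_add_mul_mem_span_of_mem_span_pow {n : ℕ} (α β : Aring K)
    (h : α * π K (X 0) ^ n + β * π K (X 1) ^ n ∈ Ideal.span {π K (X 2), π K (X 3)} ^ n) :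
    α * π K (X 0) ^ n + β * π K (X 1) ^ n ∈ Ideal.span {π K (X 2) ^ n, π K (X 3) ^ n,
      π K (X 0) * π K (X 2) * π K (X 3) ^ (n - 1)} := by
  obtain ⟨a, rfl⟩ := π_surjective α
  obtain ⟨b, rfl⟩ := π_surjective β
  have hs : IsWeightedHomogeneous xyWeight (X 0 ^ n : MvPolynomial (Fin 4) K) 0 :=
    (isWeightedHomogeneous_X K xyWeight 0).pow n
  have ht : IsWeightedHomogeneous xyWeight (X 1 ^ n : MvPolynomial (Fin 4) K) 0 :=
    (isWeightedHomogeneous_X K xyWeight 1).pow n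
  have hu : a * X 0 ^ n + b * X 1 ^ n ∈ xyIdeal K ^ n ⊔ Ideal.span {sQuad K} := by
    rw [← mem_map_π_iff, Ideal.map_pow, map_xyIdeal]
    simpa using h
  have hlow := xyTrunc_mem_span_sQuad hu
  rw [map_add, xyTrunc_mul_of_isWeightedHomogeneous_zero hs,
    xyTrunc_mul_of_isWeightedHomogeneous_zero ht, ← ker_π, RingHom.mem_ker] at hlow
  have hsplit : π K a * π K (X 0) ^ n + π K b * π K (X 1) ^ n =
      π K (X 0) ^ n * π K (a - xyTrunc n a) + π K (X 1) ^ n * π K (b - xyTrunc n b) +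
        π K (xyTrunc n a * X 0 ^ n + xyTrunc n b * X 1 ^ n) := by
    simp only [map_add, map_sub, map_mul, map_pow]
    ring
  have hhigh : ∀ p, π K (p - xyTrunc n p) ∈ Ideal.span {π K (X 2), π K (X 3)} ^ n := fun p => by
    rw [← map_xyIdeal, ← Ideal.map_pow]
    exact Ideal.mem_map_of_mem _ (sub_xyTrunc_mem_xyIdeal_pow n p)
  rw [hsplit, hlow, add_zero]
  exact add_mem
    (span_s_pow_mul_span_pair_pow_le π_sQuad_eq_zero n (Ideal.mul_mem_mul
      (Ideal.pow_mem_pow (Ideal.mem_span_singleton_self _) n) (hhigh a)))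
    (span_t_pow_mul_span_pair_pow_le π_sQuad_eq_zero n (Ideal.mul_mem_mul
      (Ideal.pow_mem_pow (Ideal.mem_span_singleton_self _) n) (hhigh b)))

theorem isMaximal_span_π_X :
    (Ideal.span {π K (X 0), π K (X 1), π K (X 2), π K (X 3)}).IsMaximal := by
  have hmap : Ideal.span {π K (X 0), π K (X 1), π K (X 2), π K (X 3)} =
      (idealOfVars (Fin 4) K).map (π K) := by
    rw [Ideal.map_span, ← Set.range_comp]
    congr 1
    ext z
    simp [Fin.exists_fin_succ, eq_comm]
  have hker : RingHom.ker (π K) ≤ idealOfVars (Fin 4) K := by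
    refine ker_π.trans_le (span_sQuad_le_xyIdeal.trans (Ideal.span_le.mpr ?_))
    rintro _ (rfl | rfl) <;> exact Ideal.subset_span ⟨_, rfl⟩
  have := isMaximal_idealOfVars (σ := Fin 4) (F := K)
  rw [hmap]
  exact Ideal.IsMaximal.map_of_surjective_of_ker_le π_surjective hker

end SQuad

/-- In `A = K[s,t,x,y]/(sx²+txy+sy²)`, for `n ≥ 2` the ideal `(xⁿ, yⁿ, sxy^{n−1})` equals
`(x,y)ⁿ ∩ (xⁿ, yⁿ, sxy^{n−1}, sⁿ, tⁿ)`, and both of these ideals are primary: a primary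
decomposition. -/
theorem stmt_12 (K : Type) [Field K] (n : ℕ) (hn : 2 ≤ n) :
    Ideal.span {π K (X 2 ^ n), π K (X 3 ^ n), π K (X 0 * X 2 * X 3 ^ (n - 1))} =
        (Ideal.span {π K (X 2), π K (X 3)}) ^ n ⊓
          Ideal.span {π K (X 2 ^ n), π K (X 3 ^ n), π K (X 0 * X 2 * X 3 ^ (n - 1)),
            π K (X 0 ^ n), π K (X 1 ^ n)} ∧
      Ideal.IsPrimary ((Ideal.span {π K (X 2), π K (X 3)}) ^ n) ∧
      Ideal.IsPrimary (Ideal.span {π K (X 2 ^ n), π K (X 3 ^ n),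
        π K (X 0 * X 2 * X 3 ^ (n - 1)), π K (X 0 ^ n), π K (X 1 ^ n)}) := by
  have hn0 : n ≠ 0 := by omega
  simp only [map_pow, map_mul]
  exact ⟨SQuad.span_eq_inf_of_forall_mem SQuad.mul_add_mul_mem_span_of_mem_span_pow,
    SQuad.isPrimary_span_π_X_pow hn0,
    SQuad.isPrimary_span_of_isMaximal SQuad.isMaximal_span_π_X hn0⟩
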